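/- arXiv:2602.23473 — 2 statements merged into one kernel-verified Lean document; each statement's English description precedes it below -/
import Mathlib

section
/- Let $\bar{D} \in \mathbb{N}$ and $N \in \mathbb{N}$. Given elements $p^{(n)} \in T^{\mathrm{ext}}((\mathbb{R}^{\bar{D}})^*)$ and $q^{(n,n')} \in T^{\mathrm{ext}}((\mathbb{R}^{\bar{D}})^*)$ for $n, n' = 1, \dots, N$ such that the empty-word coefficient of each $q^{(n,n')}$ vanishes, there exists a unique tuple $x = (x^{(1)}, \dots, x^{(N)}) \in (T^{\mathrm{ext}}((\mathbb{R}^{\bar{D}})^*))^N$ satisfying the system of tensor equations $x^{(n)} = p^{(n)} + \sum_{n'=1}^N x^{(n')} \otimes q^{(n,n')}$ for all $n = 1, \dots, N$. -/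
open scoped BigOperators

abbrev Word (Dbar : ℕ) := List (Fin Dbar)

def concatProd {Dbar : ℕ} (f g : Word Dbar → ℝ) : Word Dbar → ℝ :=
  fun w => ∑ i ∈ Finset.range (w.length + 1), f (w.take i) * g (w.drop i)

def shuffleCoeff {α : Type*} [DecidableEq α] : List α → List α → List α → ℕ
  | [], v, w => if v = w then 1 else 0
  | u, [], w => if u = w then 1 else 0
  | _ :: _, _ :: _, [] => 0
  | a :: u, b :: v, c :: w =>
      (if a = c then shuffleCoeff u (b :: v) w else 0) +
      (if b = c then shuffleCoeff (a :: u) v w else 0)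

def shuffleProd {Dbar : ℕ} (f g : Word Dbar → ℝ) : Word Dbar → ℝ :=
  fun w => ∑ i ∈ Finset.range (w.length + 1),
    ∑ u : Fin i → Fin Dbar, ∑ v : Fin (w.length - i) → Fin Dbar,
      f (List.ofFn u) * g (List.ofFn v) * (shuffleCoeff (List.ofFn u) (List.ofFn v) w : ℝ)

def trunc {Dbar : ℕ} (L : ℕ) (f : Word Dbar → ℝ) : Word Dbar → ℝ :=
  fun w => if w.length ≤ L then f w else 0

noncomputable def pairing {Dbar : ℕ} (ℓ G : Word Dbar → ℝ) : ℝ :=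
  ∑' w : Word Dbar, ℓ w * G w

def Texp (Dbar : ℕ) : Set (Word Dbar → ℝ) :=
  {ℓ | ∃ C > (0:ℝ), ∀ w : Word Dbar, |ℓ w| ≤ C ^ (w.length + 1)}

def cpow {Dbar : ℕ} (f : Word Dbar → ℝ) : ℕ → Word Dbar → ℝ
  | 0 => fun w => if w = [] then 1 else 0
  | n + 1 => concatProd f (cpow f n)

noncomputable def solAux {Dbar N : ℕ} (p : Fin N → Word Dbar → ℝ)
    (q : Fin N → Fin N → Word Dbar → ℝ) : Word Dbar → Fin N → ℝ :=
  fun w n => p n w + ∑ n' : Fin N,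
    ∑ i ∈ Finset.range (w.length + 1),
      (if h : i < w.length then solAux p q (w.take i) n' else 0) * q n n' (w.drop i)
  termination_by w => w.length
  decreasing_by
    simpa [List.length_take] using h

/-- existence and uniqueness of the solution to the system of
tensor equations `x⁽ⁿ⁾ = p⁽ⁿ⁾ + ∑_{n'} x⁽ⁿ'⁾ ⊗ q⁽ⁿ,ⁿ'⁾` in the extended tensor
algebra, provided every `q⁽ⁿ,ⁿ'⁾` has vanishing empty-word coefficient. -/
theorem tensor_equation_existsUnique (Dbar N : ℕ)
    (p : Fin N → Word Dbar → ℝ) (q : Fin N → Fin N → Word Dbar → ℝ)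
    (hq : ∀ n n', q n n' List.nil = 0) :
    ∃! x : Fin N → Word Dbar → ℝ,
      ∀ n, x n = p n + ∑ n' : Fin N, concatProd (x n') (q n n') := by
  refine ⟨fun n w => solAux p q w n, ?_, ?_⟩
  · intro n
    funext w
    simp only []; rw [solAux.eq_def]
    simp only [Pi.add_apply, Finset.sum_apply, concatProd]
    congr 1
    refine Finset.sum_congr rfl fun n' _ => Finset.sum_congr rfl fun i hi => ?_
    rcases lt_or_eq_of_le (Nat.lt_succ_iff.mp (Finset.mem_range.mp hi)) with h | h
    · simp [h]
    · subst h
      simp [hq, List.drop_length]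
  · intro y hy
    funext n w
    suffices H : ∀ L : ℕ, ∀ w : Word Dbar, w.length = L → ∀ n, y n w = solAux p q w n by
      exact H w.length w rfl n
    intro L
    induction L using Nat.strong_induction_on with
    | _ L ih =>
      intro w hw n
      have := congrFun (hy n) w
      rw [this, solAux]
      simp only [Pi.add_apply, Finset.sum_apply, concatProd]
      congr 1
      refine Finset.sum_congr rfl fun n' _ => Finset.sum_congr rfl fun i hi => ?_
      rcases lt_or_eq_of_le (Nat.lt_succ_iff.mp (Finset.mem_range.mp hi)) with h | h
      · rw [dif_pos h]
        congr 1
        exact ih i (hw ▸ h) _ (by simp [List.length_take, le_of_lt h]) n'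
      · subst h
        simp [hq, List.drop_length]
end

section
/- Consider the system of tensor equations $x^{(n)} = p^{u,(n)} + \sum_{n'=1}^N x^{(n')} \otimes q^{(n,n')}$, where $p^{u,(n)} = X_0^{(n)} \phi + (b_0^{(n)}\phi + \sum_{k=1}^K b_1^{(n,k)} u^{(k)}) \otimes \mathbf{1} + \sum_{d=1}^D \sigma_0^{(n,d)} a(d)$ and $q^{(n,n')} = b_2^{(n,n')}\mathbf{1} + \sum_{d=1}^D \sigma_2^{(n,d,n')} a(d)$, with real constants $X_0^{(n)}, b_0^{(n)}, b_1^{(n,k)}, b_2^{(n,n')}, \sigma_0^{(n,d)}, \sigma_2^{(n,d,n')}$ and tensors $u^{(k)}$ having only finitely many nonzero coefficients. Then the unique solution $x = (x^{(1)}, \dots, x^{(N)})$ satisfies $x^{(n)} \in \mathcal{T}^{\exp}$ for every $n$, i.e. there exists $C > 0$ such that $|(x^{(n)})^v| \le C^{|v|}$ for all words $v$ of positive length and all $n$. -/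
open scoped BigOperators

lemma concat_single_letter {Dbar : ℕ} (f g : Word Dbar → ℝ)
    (hg : ∀ v : Word Dbar, v.length ≠ 1 → g v = 0)
    (l : Word Dbar) (a : Fin Dbar) :
    concatProd f g (l ++ [a]) = f l * g [a] := by
  unfold concatProd
  have hlen : (l ++ [a]).length = l.length + 1 := by simp
  rw [Finset.sum_eq_single l.length]
  · rw [List.take_left, List.drop_left]
  · intro i hi hne
    rw [hg]
    · ring
    · rw [List.length_drop, hlen]
      simp only [Finset.mem_range, hlen] at hi
      omega
  · intro h
    simp only [Finset.mem_range, hlen] at h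
    omega

lemma concat_nil {Dbar : ℕ} (f g : Word Dbar → ℝ) :
    concatProd f g [] = f [] * g [] := by
  simp [concatProd]

lemma concat_single_bound {Dbar : ℕ} (f g : Word Dbar → ℝ)
    (hg : ∀ v : Word Dbar, v.length ≠ 1 → g v = 0)
    (F G : ℝ) (hF : ∀ v, |f v| ≤ F) (hG : ∀ v, |g v| ≤ G)
    (w : Word Dbar) : |concatProd f g w| ≤ F * G := by
  have hF0 : 0 ≤ F := (abs_nonneg _).trans (hF [])
  have hG0 : 0 ≤ G := (abs_nonneg _).trans (hG [])
  rcases w.eq_nil_or_concat with rfl | ⟨l, a, rfl⟩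
  · rw [concat_nil, hg [] (by simp)]
    simpa using mul_nonneg hF0 hG0
  · rw [List.concat_eq_append, concat_single_letter f g hg, abs_mul]
    exact mul_le_mul (hF l) (hG [a]) (abs_nonneg _) hF0

/-- for finitely supported control tensors `u`, the unique solution
of the linear-SDE tensor system lies in `T^exp`: its coefficients at words of
positive length are bounded by `C^{|v|}` for some `C > 0`. Letter `0` is the
time letter `𝟏` and letter `d.succ` is the letter `a(d)` of the `d`-th Brownian
component. -/
theorem state_tensor_exponentially_dominated (D N K : ℕ)
    (X0 b0 : Fin N → ℝ) (b1 : Fin N → Fin K → ℝ) (b2 : Fin N → Fin N → ℝ)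
    (s0 : Fin N → Fin D → ℝ) (s2 : Fin N → Fin D → Fin N → ℝ)
    (u : Fin K → Word (D + 1) → ℝ) (hu : ∀ k, (Function.support (u k)).Finite)
    (p : Fin N → Word (D + 1) → ℝ)
    (hp : ∀ n, p n =
      (fun w => if w = List.nil then X0 n else 0)
      + concatProd
          (fun w => (if w = List.nil then b0 n else 0) + ∑ k : Fin K, b1 n k * u k w)
          (fun w => if w = [(0 : Fin (D + 1))] then 1 else 0)
      + (fun w => ∑ d : Fin D, if w = [Fin.succ d] then s0 n d else 0))
    (q : Fin N → Fin N → Word (D + 1) → ℝ)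
    (hq : ∀ n n', q n n' = fun w =>
      (if w = [(0 : Fin (D + 1))] then b2 n n' else 0)
      + ∑ d : Fin D, if w = [Fin.succ d] then s2 n d n' else 0)
    (x : Fin N → Word (D + 1) → ℝ)
    (hx : ∀ n, x n = p n + ∑ n' : Fin N, concatProd (x n') (q n n')) :
    ∃ C > (0:ℝ), ∀ (n : Fin N) (w : Word (D + 1)), w ≠ List.nil →
      |x n w| ≤ C ^ w.length := by
  classical
  -- bound on u
  have hU : ∀ k v, |u k v| ≤ ∑ v' ∈ (hu k).toFinset, |u k v'| := by
    intro k v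
    by_cases hv : u k v = 0
    · rw [hv, abs_zero]
      exact Finset.sum_nonneg fun _ _ => abs_nonneg _
    · exact Finset.single_le_sum (f := fun v' => |u k v'|) (fun _ _ => abs_nonneg _)
        ((hu k).mem_toFinset.mpr hv)
  have hU0 : ∀ k, (0:ℝ) ≤ ∑ v' ∈ (hu k).toFinset, |u k v'| :=
    fun k => Finset.sum_nonneg fun _ _ => abs_nonneg _
  -- per-n bound for p
  set PB : Fin N → ℝ := fun n =>
    |X0 n| + (|b0 n| + ∑ k, |b1 n k| * ∑ v' ∈ (hu k).toFinset, |u k v'|) + ∑ d, |s0 n d|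
    with hPBdef
  have hPB0 : ∀ n, 0 ≤ PB n := fun n =>
    add_nonneg (add_nonneg (abs_nonneg _) (add_nonneg (abs_nonneg _)
      (Finset.sum_nonneg fun k _ => mul_nonneg (abs_nonneg _) (hU0 k))))
      (Finset.sum_nonneg fun _ _ => abs_nonneg _)
  set Mp : ℝ := 1 + ∑ n, PB n with hMpdef
  have hMp1 : (1:ℝ) ≤ Mp :=
    le_add_of_nonneg_right (Finset.sum_nonneg fun n _ => hPB0 n)
  have hMpPB : ∀ n, PB n ≤ Mp := by
    intro n
    have := Finset.single_le_sum (f := PB) (fun i _ => hPB0 i) (Finset.mem_univ n)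
    rw [hMpdef]; linarith
  -- uniform bound for p
  have hpbound : ∀ n w, |p n w| ≤ Mp := by
    intro n w
    rw [hp]
    simp only [Pi.add_apply]
    have h1 : |(if w = ([] : Word (D+1)) then X0 n else 0)| ≤ |X0 n| := by
      split <;> simp
    have h2 : |concatProd
        (fun v => (if v = ([]:Word (D+1)) then b0 n else 0) + ∑ k, b1 n k * u k v)
        (fun v => if v = [(0 : Fin (D + 1))] then 1 else 0) w|
        ≤ (|b0 n| + ∑ k, |b1 n k| * ∑ v' ∈ (hu k).toFinset, |u k v'|) * 1 := by
      apply concat_single_bound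
      · intro v hv
        rw [if_neg]
        rintro rfl; simp at hv
      · intro v
        refine (abs_add_le _ _).trans (add_le_add ?_ ?_)
        · split <;> simp
        · refine (Finset.abs_sum_le_sum_abs _ _).trans (Finset.sum_le_sum fun k _ => ?_)
          rw [abs_mul]
          exact mul_le_mul_of_nonneg_left (hU k v) (abs_nonneg _)
      · intro v; split <;> simp
    have h3 : |∑ d, if w = [Fin.succ d] then s0 n d else 0| ≤ ∑ d, |s0 n d| := by
      refine (Finset.abs_sum_le_sum_abs _ _).trans (Finset.sum_le_sum fun d _ => ?_)
      split <;> simp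
    have habs := (abs_add_le (((fun w => if w = ([]:Word (D+1)) then X0 n else 0) : Word (D+1) → ℝ) w
        + concatProd (fun v => (if v = ([]:Word (D+1)) then b0 n else 0) + ∑ k, b1 n k * u k v)
          (fun v => if v = [(0 : Fin (D + 1))] then 1 else 0) w)
        ((fun w => ∑ d, if w = [Fin.succ d] then s0 n d else 0) w))
    have habs2 := abs_add_le ((fun w => if w = ([]:Word (D+1)) then X0 n else 0) w)
        (concatProd (fun v => (if v = ([]:Word (D+1)) then b0 n else 0) + ∑ k, b1 n k * u k v)
          (fun v => if v = [(0 : Fin (D + 1))] then 1 else 0) w)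
    have hPBn := hMpPB n
    rw [hPBdef] at hPBn
    simp only at habs habs2 h1 h2 h3 hPBn ⊢
    nlinarith [h1, h2, h3]
  -- q vanishes off length-1 words
  have hq1 : ∀ n n' (v : Word (D+1)), v.length ≠ 1 → q n n' v = 0 := by
    intro n n' v hv
    simp only [hq n n']
    rw [if_neg (by rintro rfl; simp at hv),
      Finset.sum_eq_zero fun d _ => if_neg (by rintro rfl; simp at hv), add_zero]
  -- bound on q coefficients
  have hqb : ∀ n n' (v : Word (D+1)), |q n n' v| ≤ |b2 n n'| + ∑ d, |s2 n d n'| := by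
    intro n n' v
    simp only [hq n n']
    refine (abs_add_le _ _).trans (add_le_add ?_ ?_)
    · split <;> simp
    · refine (Finset.abs_sum_le_sum_abs _ _).trans (Finset.sum_le_sum fun d _ => ?_)
      split <;> simp
  have hBq0 : ∀ n n', (0:ℝ) ≤ |b2 n n'| + ∑ d, |s2 n d n'| := fun n n' =>
    add_nonneg (abs_nonneg _) (Finset.sum_nonneg fun _ _ => abs_nonneg _)
  set C0 : ℝ := 1 + ∑ n, ∑ n', (|b2 n n'| + ∑ d, |s2 n d n'|) with hC0def
  have hC01 : (1:ℝ) ≤ C0 :=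
    le_add_of_nonneg_right (Finset.sum_nonneg fun n _ =>
      Finset.sum_nonneg fun n' _ => hBq0 n n')
  have hrow : ∀ n, (∑ n', (|b2 n n'| + ∑ d, |s2 n d n'|)) ≤ C0 - 1 := by
    intro n
    have := Finset.single_le_sum
      (f := fun n => ∑ n', (|b2 n n'| + ∑ d, |s2 n d n'|))
      (fun i _ => Finset.sum_nonneg fun n' _ => hBq0 i n') (Finset.mem_univ n)
    rw [hC0def]; linarith
  -- main induction
  have key : ∀ (w : Word (D+1)) (n : Fin N), |x n w| ≤ Mp * C0 ^ w.length := by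
    intro w
    induction w using List.reverseRecOn with
    | nil =>
      intro n
      have hx0 : x n [] = p n [] := by
        rw [hx n]
        simp only [Pi.add_apply, Finset.sum_apply]
        rw [Finset.sum_eq_zero, add_zero]
        intro n' _
        rw [concat_nil, hq1 n n' [] (by simp), mul_zero]
      rw [hx0]
      simpa using hpbound n []
    | append_singleton l a ih =>
      intro n
      have hxw : x n (l ++ [a]) = p n (l ++ [a]) + ∑ n', x n' l * q n n' [a] := by
        conv_lhs => rw [hx n]
        simp only [Pi.add_apply, Finset.sum_apply]
        congr 1
        exact Finset.sum_congr rfl fun n' _ => concat_single_letter _ _ (hq1 n n') l a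
      rw [hxw]
      have hsum : |∑ n', x n' l * q n n' [a]|
          ≤ (Mp * C0 ^ l.length) * ∑ n', (|b2 n n'| + ∑ d, |s2 n d n'|) := by
        rw [Finset.mul_sum]
        refine (Finset.abs_sum_le_sum_abs _ _).trans (Finset.sum_le_sum fun n' _ => ?_)
        rw [abs_mul]
        exact mul_le_mul (ih n') (hqb n n' [a]) (abs_nonneg _)
          (mul_nonneg (by linarith) (pow_nonneg (by linarith) _))
      have hlen : (l ++ [a]).length = l.length + 1 := by simp
      rw [hlen, pow_succ]
      have hpow : (1:ℝ) ≤ C0 ^ l.length := one_le_pow₀ hC01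
      have h5 := hpbound n (l ++ [a])
      have h6 := hrow n
      have hM0 : (0:ℝ) ≤ Mp := by linarith
      have hMC : (0:ℝ) ≤ Mp * C0 ^ l.length :=
        mul_nonneg hM0 (pow_nonneg (by linarith) _)
      calc |p n (l ++ [a]) + ∑ n', x n' l * q n n' [a]|
          ≤ |p n (l ++ [a])| + |∑ n', x n' l * q n n' [a]| := abs_add_le _ _
        _ ≤ Mp + (Mp * C0 ^ l.length) * (C0 - 1) :=
            add_le_add h5 (hsum.trans (mul_le_mul_of_nonneg_left h6 hMC))
        _ ≤ Mp * C0 ^ l.length + (Mp * C0 ^ l.length) * (C0 - 1) := by nlinarith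
        _ = Mp * (C0 ^ l.length * C0) := by ring
  refine ⟨Mp * C0, by nlinarith, fun n w hw => ?_⟩
  have hm : 1 ≤ w.length := List.length_pos_iff.mpr hw
  calc |x n w| ≤ Mp * C0 ^ w.length := key w n
    _ ≤ Mp ^ w.length * C0 ^ w.length := by
        refine mul_le_mul_of_nonneg_right ?_ (pow_nonneg (by linarith) _)
        exact le_self_pow₀ (by linarith) (by omega)
    _ = (Mp * C0) ^ w.length := (mul_pow _ _ _).symm
end
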